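/- Consider X = ℤ and the class H^0 = H^0_1 ∪ H^0_2 where H^0_1 = {h : supp(h) = {0} ∪ A ∪ {x ∈ ℤ : x > j} for some A ⊆ ℤ, j > 0} and H^0_2 = {h : supp(h) = {x ∈ ℤ : x < 0} ∪ A for some A ⊆ ℤ\{0}}. The generator G_0 defined by G_0(x_1,...,x_t) = max{t, o_1,...,o_{t-1}, x_1,...,x_t} + 1 if 0 ∈ {x_1,...,x_t}, and min{0, o_1,...,o_{t-1}, x_1,...,x_t} − 1 otherwise (where o_s are its own earlier outputs), generates H^0 in the limit. -/
import Mathlib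


/-- H^0_1 = {h : supp(h) = {0} ∪ A ∪ {x ∈ ℤ : x > j}, A ⊆ ℤ, j > 0}. -/
def H01 : Set (Set ℤ) :=
  {S | ∃ (A : Set ℤ) (j : ℤ), 0 < j ∧ S = {(0 : ℤ)} ∪ A ∪ {z | j < z}}

/-- H^0_2 = {h : supp(h) = {x ∈ ℤ : x < 0} ∪ A, A ⊆ ℤ \ {0}}. -/
def H02 : Set (Set ℤ) :=
  {S | ∃ A : Set ℤ, (0 : ℤ) ∉ A ∧ S = {z : ℤ | z < 0} ∪ A}

def H0 : Set (Set ℤ) := H01 ∪ H02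

/-- The generator G₀: on input x_1,...,x_t it computes its own earlier outputs
o_1,...,o_{t-1} (on the proper prefixes), and outputs
max{t, o_1,...,o_{t-1}, x_1,...,x_t} + 1 if 0 has appeared, and
min{0, o_1,...,o_{t-1}, x_1,...,x_t} − 1 otherwise. -/
def G0 (l : List ℤ) : ℤ :=
  let prev := (List.range (l.length - 1)).attach.map
      (fun s => G0 (l.take (s.1 + 1)))
  if (0 : ℤ) ∈ l then (prev ++ l).foldl max (l.length : ℤ) + 1
  else (prev ++ l).foldl min 0 - 1
termination_by l.length
decreasing_by
  have := List.mem_range.mp s.2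
  simp only [List.length_take]
  omega

def Out {X : Type*} (G : List X → X) (x : ℕ → X) (s : ℕ) : X :=
  G ((List.range s).map x)


lemma le_foldl_max (a : ℤ) (l : List ℤ) : a ≤ l.foldl max a := by
  induction l generalizing a with
  | nil => exact le_refl _
  | cons c t ih => exact le_trans (le_max_left a c) (ih _)

lemma mem_le_foldl_max (a : ℤ) {b : ℤ} {l : List ℤ} (hb : b ∈ l) :
    b ≤ l.foldl max a := by
  induction l generalizing a with
  | nil => cases hb
  | cons c t ih =>
    rcases List.mem_cons.mp hb with rfl | h
    · exact le_trans (le_max_right a b) (le_foldl_max _ _)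
    · exact ih _ h

lemma foldl_min_le (a : ℤ) (l : List ℤ) : l.foldl min a ≤ a := by
  induction l generalizing a with
  | nil => exact le_refl _
  | cons c t ih => exact le_trans (ih _) (min_le_left a c)

lemma foldl_min_le_mem (a : ℤ) {b : ℤ} {l : List ℤ} (hb : b ∈ l) :
    l.foldl min a ≤ b := by
  induction l generalizing a with
  | nil => cases hb
  | cons c t ih =>
    rcases List.mem_cons.mp hb with rfl | h
    · exact le_trans (foldl_min_le (min a b) t) (min_le_right a b)
    · exact ih _ h

/-- G₀ generates H⁰ in the limit. -/
theorem statement7 :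
    ∀ h ∈ H0, ∀ x : ℕ → ℤ,
      (∀ t, x t ∈ h) → (∀ y ∈ h, ∃ t, x t = y) →
      ∃ tstar : ℕ, ∀ s, tstar ≤ s → Out G0 x s ∈ h ∧ ∀ r < s, Out G0 x s ≠ x r := by
  intro h hh x hx hsurj
  rcases hh with ⟨A, j, hj, rfl⟩ | ⟨A, hA, rfl⟩
  · obtain ⟨t0, ht0⟩ := hsurj 0 (by left; left; rfl)
    refine ⟨max (t0 + 1) j.toNat, fun s hs => ?_⟩
    have hst0 : t0 < s := by omega
    have hsj : j ≤ (s : ℤ) := by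
      have : j.toNat ≤ s := le_trans (le_max_right _ _) hs
      omega
    set l := (List.range s).map x with hl
    have h0l : (0 : ℤ) ∈ l := by
      refine List.mem_map.mpr ⟨t0, List.mem_range.mpr hst0, ht0⟩
    have hlen : l.length = s := by simp [hl]
    have hout : Out G0 x s =
        ((((List.range (l.length - 1)).attach.map
          (fun s => G0 (l.take (s.1 + 1)))) ++ l).foldl max (l.length : ℤ)) + 1 := by
      show G0 l = _
      rw [G0]
      simp [h0l]
    set P := (List.range (l.length - 1)).attach.map (fun s => G0 (l.take (s.1 + 1)))
    have hbig : (s : ℤ) ≤ (P ++ l).foldl max (l.length : ℤ) := by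
      rw [hlen]; exact le_foldl_max _ _
    constructor
    · right
      show j < Out G0 x s
      rw [hout]
      omega
    · intro r hr
      have hxr : x r ∈ P ++ l := by
        refine List.mem_append.mpr (Or.inr ?_)
        exact List.mem_map.mpr ⟨r, List.mem_range.mpr hr, rfl⟩
      have := mem_le_foldl_max (l.length : ℤ) hxr
      rw [hout]
      omega
  · refine ⟨0, fun s _ => ?_⟩
    set l := (List.range s).map x with hl
    have h0l : (0 : ℤ) ∉ l := by
      intro hmem
      obtain ⟨t, _, ht⟩ := List.mem_map.mp hmem
      have := hx t
      rw [ht] at this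
      rcases this with h1 | h2
      · exact absurd h1 (by simp)
      · exact hA h2
    have hout : Out G0 x s =
        ((((List.range (l.length - 1)).attach.map
          (fun s => G0 (l.take (s.1 + 1)))) ++ l).foldl min 0) - 1 := by
      show G0 l = _
      rw [G0]
      simp [h0l]
    set P := (List.range (l.length - 1)).attach.map (fun s => G0 (l.take (s.1 + 1)))
    have hle : (P ++ l).foldl min 0 ≤ 0 := foldl_min_le _ _
    constructor
    · left
      show Out G0 x s < 0
      rw [hout]; omega
    · intro r hr
      have hxr : x r ∈ P ++ l := by
        refine List.mem_append.mpr (Or.inr ?_)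
        exact List.mem_map.mpr ⟨r, List.mem_range.mpr hr, rfl⟩
      have := foldl_min_le_mem 0 hxr
      rw [hout]
      omega
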